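/- For all integers r ≥ 1, k_1,…,k_r ≥ 1 and l ≥ 1, letting w = x^{k_1-1}y x^{k_2-1}y ⋯ x^{k_r-1}y = z_{k_1}⋯z_{k_r}, one has δ_l(z·w) = z·(w * z_l); equivalently, x^{l-1}y·w + δ_l(w) = z_{k_1}⋯z_{k_r} * z_l. -/

import Mathlib

/-! Since `δ_l` kills `x`, it acts on `z_k = x^{k-1} y` only through `y`, and
`x^{k-1} z x^{l-1} y = z_{k+l} + z_k z_l`. Leibniz' rule then reproduces, letter by letter,
the recursion `z_k w * z_l = z_k (w * z_l) + z_l z_k w + z_{k+l} w` of the harmonic product,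
which gives `z_l w + δ_l(w) = w * z_l`; multiplying by `z` and using `δ_l(z) = z z_l`
yields the theorem. -/

noncomputable section

namespace FMZVNote

/-- The noncommutative polynomial ring `𝔥 = ℚ⟨x,y⟩` in two indeterminates `x`, `y`. -/
abbrev H : Type := FreeAlgebra ℚ (Fin 2)

/-- The generator `x`. -/
def x : H := FreeAlgebra.ι ℚ 0

/-- The generator `y`. -/
def y : H := FreeAlgebra.ι ℚ 1

/-- `z = x + y`. -/
def z : H := x + y

/-- `z_k = x^{k-1} y`. -/
def zk (k : ℕ) : H := x ^ (k - 1) * y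

/-- The word `z_{k_1} ⋯ z_{k_r}` associated to an index `(k_1, …, k_r)`. -/
def zword (ks : List ℕ) : H := (ks.map zk).prod

/-- The harmonic product `z_{k_1}⋯z_{k_r} * z_{l_1}⋯z_{l_s}` of two words, determined by
`1*w = w*1 = w` and
`z_k w₁ * z_l w₂ = z_k (w₁ * z_l w₂) + z_l (z_k w₁ * w₂) + z_{k+l} (w₁ * w₂)`. -/
def hprod : List ℕ → List ℕ → H
  | [], w => zword w
  | k :: w1, [] => zword (k :: w1)
  | k :: w1, l :: w2 =>
      zk k * hprod w1 (l :: w2) + zk l * hprod (k :: w1) w2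
        + zk (k + l) * hprod w1 w2
  termination_by w1 w2 => w1.length + w2.length

section Leibniz

variable {A : Type*} [Ring A] {D : A → A}

theorem map_one_eq_zero_of_leibniz (hD : ∀ a b : A, D (a * b) = D a * b + a * D b) :
    D 1 = 0 := by
  simpa using hD 1 1

theorem map_pow_eq_zero_of_leibniz (hD : ∀ a b : A, D (a * b) = D a * b + a * D b)
    {a : A} (ha : D a = 0) (n : ℕ) : D (a ^ n) = 0 := by
  induction n with
  | zero => rw [pow_zero]; exact map_one_eq_zero_of_leibniz hD
  | succ n ih => rw [pow_succ, hD, ih, ha, zero_mul, mul_zero, add_zero]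

end Leibniz

theorem hprod_nil (w : List ℕ) : hprod w [] = zword w := by
  cases w <;> simp [hprod]

theorem hprod_cons_singleton (k l : ℕ) (w : List ℕ) :
    hprod (k :: w) [l] = zk k * hprod w [l] + zk l * zword (k :: w) + zk (k + l) * zword w := by
  rw [hprod, hprod_nil, hprod_nil]

theorem zword_cons (k : ℕ) (w : List ℕ) : zword (k :: w) = zk k * zword w := by
  simp [zword]

theorem x_pow_mul_z_mul_zk {k l : ℕ} (hk : 1 ≤ k) (hl : 1 ≤ l) :
    x ^ (k - 1) * (z * zk l) = zk (k + l) + zk k * zk l := by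
  have hpow : x ^ (k - 1) * x * x ^ (l - 1) = x ^ (k + l - 1) := by
    rw [← pow_succ, ← pow_add]
    congr 1
    omega
  simp only [zk, z, add_mul, mul_add, ← mul_assoc, hpow]

section Delta

variable {D : H → H} {l : ℕ}

theorem map_zk_of_leibniz (hD : ∀ a b : H, D (a * b) = D a * b + a * D b)
    (hDx : D x = 0) (hDy : D y = z * x ^ (l - 1) * y) (hl : 1 ≤ l) {k : ℕ} (hk : 1 ≤ k) :
    D (zk k) = zk (k + l) + zk k * zk l :=
  calc D (zk k) = x ^ (k - 1) * (z * zk l) := by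
        rw [zk, hD, map_pow_eq_zero_of_leibniz hD hDx, hDy, zero_mul, zero_add, mul_assoc z, zk]
    _ = zk (k + l) + zk k * zk l := x_pow_mul_z_mul_zk hk hl

theorem zk_mul_zword_add_map_zword (hD : ∀ a b : H, D (a * b) = D a * b + a * D b)
    (hDx : D x = 0) (hDy : D y = z * x ^ (l - 1) * y) (hl : 1 ≤ l) :
    ∀ ks : List ℕ, (∀ k ∈ ks, 1 ≤ k) → zk l * zword ks + D (zword ks) = hprod ks [l]
  | [], _ => by simp [zword, hprod, map_one_eq_zero_of_leibniz hD]
  | k :: w, hks => by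
    have ih := zk_mul_zword_add_map_zword hD hDx hDy hl w fun m hm => hks m (by simp [hm])
    rw [hprod_cons_singleton, ← ih, zword_cons, hD,
      map_zk_of_leibniz hD hDx hDy hl (hks k List.mem_cons_self)]
    noncomm_ring

end Delta

theorem delta_of_z_mul_word_general
    (ks : List ℕ) (h1 : ∀ k ∈ ks, 1 ≤ k)
    (l : ℕ) (hl : 1 ≤ l)
    (D : H →ₗ[ℚ] H)
    (hDleibniz : ∀ a b : H, D (a * b) = D a * b + a * D b)
    (hDx : D x = 0) (hDy : D y = z * x ^ (l - 1) * y)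
    :
    D (z * zword ks) = z * hprod ks [l] := by
  have hDz : D z = z * zk l := by
    rw [z, map_add, hDx, hDy, zero_add, mul_assoc, zk, z]
  rw [hDleibniz, hDz, ← zk_mul_zword_add_map_zword hDleibniz hDx hDy hl ks h1, mul_add, mul_assoc]

/-- For `w = z_{k_1}⋯z_{k_r}`, one has `δ_l(z·w) = z·(w * z_l)`. -/
theorem delta_of_z_mul_word
    (ks : List ℕ) (hne : ks ≠ []) (h1 : ∀ k ∈ ks, 1 ≤ k)
    (l : ℕ) (hl : 1 ≤ l)
    (D : H →ₗ[ℚ] H)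
    (hDleibniz : ∀ a b : H, D (a * b) = D a * b + a * D b)
    (hDx : D x = 0) (hDy : D y = z * x ^ (l - 1) * y)
    :
    D (z * zword ks) = z * hprod ks [l] :=
  delta_of_z_mul_word_general ks h1 l hl D hDleibniz hDx hDy

end FMZVNote
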